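/- Let ξ be a symmetric traceless real 3×3 matrix with ξ₁₃ = ξ₃₁ = ξ₂₃ = ξ₃₂ = 0, and define the Hessian quadratic form of the bulk density at Q⁺ by H_{Q⁺}(ξ) := −a·tr(ξ²) − 2b·tr(Q⁺ξ²) + c·tr((Q⁺)²)·tr(ξ²) + 2c·(tr(Q⁺ξ))². Then H_{Q⁺}(ξ) = s₊b·(ξ₁₁² + ξ₂₂² + ξ₁₂² + ξ₂₁²) + 3a·ξ₃₃², and consequently H_{Q⁺}(ξ) ≥ λ·|ξ|², where λ := min(s₊b, 3a) > 0. -/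

import Mathlib

open Matrix

/-- `s₊ = (b + √(b² + 24ac)) / (4c)`. -/
noncomputable def sPlus (a b c : ℝ) : ℝ :=
  (b + Real.sqrt (b ^ 2 + 24 * a * c)) / (4 * c)

/-- `Q⁺ = diag(−s/3, −s/3, 2s/3)`. -/
noncomputable def Qplus (s : ℝ) : Matrix (Fin 3) (Fin 3) ℝ :=
  Matrix.diagonal ![-s / 3, -s / 3, 2 * s / 3]

/-- The Hessian quadratic form of the bulk density at `Q`:
`H_Q(ξ) = −a·tr(ξ²) − 2b·tr(Qξ²) + c·tr(Q²)·tr(ξ²) + 2c·(tr(Qξ))²`. -/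
noncomputable def bulkHessian (a b c : ℝ) (Q ξ : Matrix (Fin 3) (Fin 3) ℝ) : ℝ :=
  -a * (ξ * ξ).trace - 2 * b * (Q * ξ * ξ).trace
    + c * (Q * Q).trace * (ξ * ξ).trace + 2 * c * ((Q * ξ).trace) ^ 2

lemma sPlus_pos (a b c : ℝ) (ha : 0 < a) (hb : 0 < b) (hc : 0 < c) :
    0 < sPlus a b c := by
  have := Real.sqrt_nonneg (b ^ 2 + 24 * a * c)
  unfold sPlus
  positivity

lemma sPlus_key (a b c : ℝ) (ha : 0 < a) (hb : 0 < b) (hc : 0 < c) :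
    2 * c * sPlus a b c ^ 2 = b * sPlus a b c + 3 * a := by
  have hr : Real.sqrt (b ^ 2 + 24 * a * c) ^ 2 = b ^ 2 + 24 * a * c := by
    rw [sq]; exact Real.mul_self_sqrt (by nlinarith)
  unfold sPlus
  field_simp
  rw [show b ^ 2 + c * 24 * a = b ^ 2 + 24 * a * c by ring]
  nlinarith [hr]

/-- Lemma 2.1: for symmetric traceless `ξ` with `ξ₁₃ = ξ₃₁ = ξ₂₃ = ξ₃₂ = 0`,
`H_{Q⁺}(ξ) = s₊b(ξ₁₁² + ξ₂₂² + ξ₁₂² + ξ₂₁²) + 3a ξ₃₃² ≥ λ|ξ|²`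
with `λ = min(s₊b, 3a) > 0`. -/
theorem bulkHessian_at_Qplus (a b c : ℝ) (ha : 0 < a) (hb : 0 < b) (hc : 0 < c)
    (ξ : Matrix (Fin 3) (Fin 3) ℝ)
    (hξs : ξᵀ = ξ) (hξt : ξ.trace = 0)
    (h13 : ξ 0 2 = 0) (h31 : ξ 2 0 = 0) (h23 : ξ 1 2 = 0) (h32 : ξ 2 1 = 0) :
    bulkHessian a b c (Qplus (sPlus a b c)) ξ
      = sPlus a b c * b * ((ξ 0 0) ^ 2 + (ξ 1 1) ^ 2 + (ξ 0 1) ^ 2 + (ξ 1 0) ^ 2)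
        + 3 * a * (ξ 2 2) ^ 2 ∧
    0 < min (sPlus a b c * b) (3 * a) ∧
    bulkHessian a b c (Qplus (sPlus a b c)) ξ
      ≥ min (sPlus a b c * b) (3 * a) * ∑ i, ∑ j, (ξ i j) ^ 2 := by
  set s := sPlus a b c with hs
  have hspos : 0 < s := sPlus_pos a b c ha hb hc
  have hkey : 2 * c * s ^ 2 = b * s + 3 * a := sPlus_key a b c ha hb hc
  have h21 : ξ 1 0 = ξ 0 1 := by
    have := congrFun (congrFun hξs 1) 0
    simpa [Matrix.transpose_apply] using this.symm
  have htr : ξ 0 0 + ξ 1 1 + ξ 2 2 = 0 := by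
    have := hξt
    simp [Matrix.trace, Fin.sum_univ_three, Matrix.diag] at this
    linarith
  have hH : bulkHessian a b c (Qplus s) ξ
      = s * b * ((ξ 0 0) ^ 2 + (ξ 1 1) ^ 2 + (ξ 0 1) ^ 2 + (ξ 1 0) ^ 2)
        + 3 * a * (ξ 2 2) ^ 2 := by
    simp only [bulkHessian, Qplus, Matrix.trace, Matrix.diag, Fin.sum_univ_three,
      Matrix.mul_apply, Matrix.diagonal, Matrix.of_apply]
    simp [Fin.sum_univ_three, h13, h31, h23, h32, h21]
    have h22 : ξ 2 2 = -(ξ 0 0 + ξ 1 1) := by linarith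
    rw [h22]
    linear_combination hkey * ((ξ 0 0 ^ 2 + ξ 1 1 ^ 2 + 2 * ξ 0 1 ^ 2
      + (ξ 0 0 + ξ 1 1) ^ 2) / 3 + (ξ 0 0 + ξ 1 1) ^ 2)
  refine ⟨hH, lt_min (mul_pos hspos hb) (by linarith), ?_⟩
  rw [hH]
  have hm1 : min (s * b) (3 * a) ≤ s * b := min_le_left _ _
  have hm2 : min (s * b) (3 * a) ≤ 3 * a := min_le_right _ _
  have hm0 : 0 ≤ min (s * b) (3 * a) := le_min (by positivity) (by linarith)
  simp only [Fin.sum_univ_three, h13, h31, h23, h32]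
  nlinarith [sq_nonneg (ξ 0 0), sq_nonneg (ξ 1 1), sq_nonneg (ξ 0 1), sq_nonneg (ξ 1 0),
    sq_nonneg (ξ 2 2), mul_nonneg hm0 (sq_nonneg (ξ 2 2))]
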